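/- Every group coarse structure E on a subgroup H of an abelian group G can be extended to a group coarse structure E′ on G with E′ restricted to H equal to E. -/

import Mathlib

/-- A *coarse structure* on `X`: every entourage contains the diagonal, and the family
is closed under composition, inversion, and passing to subsets containing the diagonal. -/
def IsCoarseStructure {X : Type*} (E : Set (Set (X × X))) : Prop :=
  (∀ ε ∈ E, ∀ x : X, (x, x) ∈ ε) ∧
  (∀ ε ∈ E, ∀ δ ∈ E, {p : X × X | ∃ z : X, (p.1, z) ∈ ε ∧ (z, p.2) ∈ δ} ∈ E) ∧
  (∀ ε ∈ E, {p : X × X | (p.2, p.1) ∈ ε} ∈ E) ∧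
  (∀ ε ∈ E, ∀ ε' ⊆ ε, (∀ x : X, (x, x) ∈ ε') → ε' ∈ E)

/-- A family `I` of subsets of a group `G` is a *group ideal*. -/
def IsGroupIdeal {G : Type*} [Group G] (I : Set (Set G)) : Prop :=
  (∀ A ∈ I, ∀ B ⊆ A, B ∈ I) ∧
  (∀ A ∈ I, ∀ B ∈ I, A ∪ B ∈ I) ∧
  (∀ A : Set G, A.Finite → A ∈ I) ∧
  (∀ A ∈ I, ∀ B ∈ I, {x : G | ∃ a ∈ A, ∃ b ∈ B, x = a * b⁻¹} ∈ I)

/-- The entourage `ε_A = {(x, g•x) : x ∈ X, g ∈ A}` determined by `A ⊆ G`. -/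
def entourageOf {G X : Type*} [Group G] [MulAction G X] (A : Set G) : Set (X × X) :=
  {p : X × X | ∃ g ∈ A, p.2 = g • p.1}

/-- The coarse structure `E(G, I, X)` induced on a `G`-space `X` by a group ideal `I`:
all diagonal-containing subsets of some `ε_A` with `A ∈ I`, `1 ∈ A`. -/
def actionCoarse (G : Type*) [Group G] (I : Set (Set G)) (X : Type*) [MulAction G X] :
    Set (Set (X × X)) :=
  {ε | (∀ x : X, (x, x) ∈ ε) ∧ ∃ A ∈ I, (1 : G) ∈ A ∧ ε ⊆ entourageOf A}

/-- `E_I`: the coarse structure on `G` induced by the left action of `G` on itself. -/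
def idealCoarse {G : Type*} [Group G] (I : Set (Set G)) : Set (Set (G × G)) :=
  actionCoarse G I G

/-- The ball `B(x, ε)`. -/
def ball {X : Type*} (ε : Set (X × X)) (x : X) : Set X := {y : X | (x, y) ∈ ε}


/-- `f` is a *coarse (bornologous) mapping* from `(X, EX)` to `(Y, EY)`. -/
def IsCoarseMap {X Y : Type*} (EX : Set (Set (X × X))) (EY : Set (Set (Y × Y)))
    (f : X → Y) : Prop :=
  ∀ ε ∈ EX, ∃ δ ∈ EY, ∀ p ∈ ε, (f p.1, f p.2) ∈ δ

/-- The product coarse structure on `X × Y`, with base the componentwise products of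
entourages. -/
def prodCoarse {X Y : Type*} (EX : Set (Set (X × X))) (EY : Set (Set (Y × Y))) :
    Set (Set ((X × Y) × (X × Y))) :=
  {η | (∀ q : X × Y, (q, q) ∈ η) ∧ ∃ ε ∈ EX, ∃ δ ∈ EY,
    η ⊆ {p : (X × Y) × (X × Y) | (p.1.1, p.2.1) ∈ ε ∧ (p.1.2, p.2.2) ∈ δ}}

/-- `(G, E)` is a *coarse group*: the multiplication and inversion are coarse maps. -/
def IsCoarseGroup {G : Type*} [Group G] (E : Set (Set (G × G))) : Prop :=
  IsCoarseMap (prodCoarse E E) E (fun p => p.1 * p.2) ∧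
  IsCoarseMap E E (fun x : G => x⁻¹)

/-- `(G, E)` is a *left coarse group*. -/
def IsLeftCoarseGroup {G : Type*} [Group G] (E : Set (Set (G × G))) : Prop :=
  ∀ ε ∈ E, ∃ ε' ∈ E, ∀ g x y : G, (x, y) ∈ ε → (g * x, g * y) ∈ ε'

/-- `(G, E)` is a *right coarse group*. -/
def IsRightCoarseGroup {G : Type*} [Group G] (E : Set (Set (G × G))) : Prop :=
  ∀ ε ∈ E, ∃ ε' ∈ E, ∀ g x y : G, (x, y) ∈ ε → (x * g, y * g) ∈ ε'

/-- A coarse structure is *connected* if any two points are related by some entourage. -/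
def IsConnectedCoarse {X : Type*} (E : Set (Set (X × X))) : Prop :=
  ∀ x y : X, ∃ ε ∈ E, (x, y) ∈ ε

/-- A group ideal `I` is *invariant* if `⋃_{g ∈ G} g⁻¹ A g ∈ I` for each `A ∈ I`. -/
def IsInvariantIdeal {G : Type*} [Group G] (I : Set (Set G)) : Prop :=
  ∀ A ∈ I, {x : G | ∃ g : G, ∃ a ∈ A, x = g⁻¹ * a * g} ∈ I

/-- The subspace coarse structure induced on a subset `Y ⊆ G`. -/
def restrictCoarse {G : Type*} (E : Set (Set (G × G))) (Y : Set G) :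
    Set (Set (Y × Y)) :=
  {s | ∃ ε ∈ E, s = {p : Y × Y | ((p.1 : G), (p.2 : G)) ∈ ε}}

/-!
A group coarse structure `E` on `H` is `E_I` for the ideal `I` of its bounded sets, the subsets
of balls around `1`. On `G` take the ideal `I'` generated by the sets `F * B` with `F` finite and
`B ∈ I`. Since `G` is abelian, `(x, y) ↦ y / x` is a homomorphism, so `E_{I'}` is a group coarse
structure. Its trace on `H` is `I` again: if `f * b ∈ H` with `b ∈ H` then `f ∈ H`, hence
`(F * B) ∩ H ⊆ (F ∩ H) * B`.
-/

open scoped Pointwise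

lemma setOf_exists_mul_inv_eq_div {G : Type*} [Group G] (A B : Set G) :
    {x : G | ∃ a ∈ A, ∃ b ∈ B, x = a * b⁻¹} = A / B := by
  ext x
  rw [Set.mem_div]
  simp only [Set.mem_ofPred_eq, div_eq_mul_inv, eq_comm]

namespace IsGroupIdeal

variable {G : Type*} [Group G] {I : Set (Set G)} {A B : Set G}

lemma div_mem (hI : IsGroupIdeal I) (hA : A ∈ I) (hB : B ∈ I) : A / B ∈ I :=
  setOf_exists_mul_inv_eq_div A B ▸ hI.2.2.2 A hA B hB

lemma one_mem (hI : IsGroupIdeal I) : (1 : Set G) ∈ I :=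
  hI.2.2.1 _ (Set.finite_singleton 1)

lemma inv_mem (hI : IsGroupIdeal I) (hA : A ∈ I) : A⁻¹ ∈ I := by
  simpa using hI.div_mem hI.one_mem hA

lemma mul_mem (hI : IsGroupIdeal I) (hA : A ∈ I) (hB : B ∈ I) : A * B ∈ I := by
  simpa using hI.div_mem hA (hI.inv_mem hB)

end IsGroupIdeal

section idealCoarse

variable {G : Type*} [Group G] {I : Set (Set G)}

lemma mem_entourageOf_iff_div_mem {A : Set G} {x y : G} :
    (x, y) ∈ entourageOf A ↔ y / x ∈ A := by
  constructor
  · rintro ⟨g, hg, hy : y = g * x⟩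
    rwa [hy, mul_div_cancel_right]
  · exact fun h => ⟨y / x, h, by simp⟩

lemma entourageOf_mem_idealCoarse {A : Set G} (hA : A ∈ I) (h1 : (1 : G) ∈ A) :
    entourageOf A ∈ idealCoarse I :=
  ⟨fun x => mem_entourageOf_iff_div_mem.2 (by simpa using h1), A, hA, h1, subset_rfl⟩

lemma isCoarseStructure_idealCoarse (hI : IsGroupIdeal I) :
    IsCoarseStructure (idealCoarse I) := by
  refine ⟨fun ε hε => hε.1, ?_, ?_, fun ε ⟨_, A, hA, h1, hεA⟩ ε' hε' hdiag =>
    ⟨hdiag, A, hA, h1, hε'.trans hεA⟩⟩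
  · rintro ε ⟨hε, A, hA, hA1, hεA⟩ δ ⟨hδ, B, hB, hB1, hδB⟩
    refine ⟨fun x => ⟨x, hε x, hδ x⟩, B * A, hI.mul_mem hB hA,
      by simpa using Set.mul_mem_mul hB1 hA1, ?_⟩
    rintro ⟨x, z⟩ ⟨y, hxy, hyz⟩
    rw [mem_entourageOf_iff_div_mem, ← div_mul_div_cancel z y x]
    exact Set.mul_mem_mul (mem_entourageOf_iff_div_mem.1 (hδB hyz))
      (mem_entourageOf_iff_div_mem.1 (hεA hxy))
  · rintro ε ⟨hε, A, hA, hA1, hεA⟩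
    refine ⟨fun x => hε x, A⁻¹, hI.inv_mem hA, by simpa using hA1, ?_⟩
    rintro ⟨x, y⟩ hyx
    rw [mem_entourageOf_iff_div_mem, Set.mem_inv, inv_div]
    exact mem_entourageOf_iff_div_mem.1 (hεA hyx)

end idealCoarse

lemma isCoarseGroup_idealCoarse {G : Type*} [CommGroup G] {I : Set (Set G)}
    (hI : IsGroupIdeal I) : IsCoarseGroup (idealCoarse I) := by
  constructor
  · rintro η ⟨-, ε, ⟨-, A, hA, hA1, hεA⟩, δ, ⟨-, B, hB, hB1, hδB⟩, hη⟩
    refine ⟨entourageOf (A * B),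
      entourageOf_mem_idealCoarse (hI.mul_mem hA hB) (by simpa using Set.mul_mem_mul hA1 hB1),
      fun p hp => ?_⟩
    rw [mem_entourageOf_iff_div_mem, mul_div_mul_comm]
    exact Set.mul_mem_mul (mem_entourageOf_iff_div_mem.1 (hεA (hη hp).1))
      (mem_entourageOf_iff_div_mem.1 (hδB (hη hp).2))
  · rintro ε ⟨-, A, hA, hA1, hεA⟩
    refine ⟨entourageOf A⁻¹, entourageOf_mem_idealCoarse (hI.inv_mem hA) (by simpa using hA1),
      fun p hp => ?_⟩
    rw [mem_entourageOf_iff_div_mem, Set.mem_inv, inv_div_inv, ← inv_div, inv_inv]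
    exact mem_entourageOf_iff_div_mem.1 (hεA hp)

lemma IsCoarseStructure.union_mem {X : Type*} {E : Set (Set (X × X))} (hE : IsCoarseStructure E)
    {ε δ : Set (X × X)} (hε : ε ∈ E) (hδ : δ ∈ E) : ε ∪ δ ∈ E := by
  refine hE.2.2.2 _ (hE.2.1 ε hε δ hδ) _ ?_ (fun x => Or.inl (hE.1 ε hε x))
  rintro ⟨x, y⟩ (h | h)
  · exact ⟨y, h, hE.1 δ hδ y⟩
  · exact ⟨x, hE.1 ε hε x, h⟩

section boundedIdeal

variable {K : Type*} [Group K] {E : Set (Set (K × K))}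

lemma IsCoarseGroup.exists_mul_mem (hE : IsCoarseStructure E) (hgr : IsCoarseGroup E)
    {ε δ : Set (K × K)} (hε : ε ∈ E) (hδ : δ ∈ E) :
    ∃ γ ∈ E, ∀ x y x' y' : K, (x, y) ∈ ε → (x', y') ∈ δ → (x * x', y * y') ∈ γ := by
  obtain ⟨γ, hγ, hmul⟩ := hgr.1
    {p : (K × K) × (K × K) | (p.1.1, p.2.1) ∈ ε ∧ (p.1.2, p.2.2) ∈ δ}
    ⟨fun q => ⟨hE.1 ε hε q.1, hE.1 δ hδ q.2⟩, ε, hε, δ, hδ, subset_rfl⟩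
  exact ⟨γ, hγ, fun x y x' y' h h' => hmul ((x, x'), (y, y')) ⟨h, h'⟩⟩

def boundedIdeal (E : Set (Set (K × K))) : Set (Set K) :=
  {B | ∃ ε ∈ E, B ⊆ ball ε 1}

lemma union_mem_boundedIdeal (hE : IsCoarseStructure E) {A B : Set K}
    (hA : A ∈ boundedIdeal E) (hB : B ∈ boundedIdeal E) : A ∪ B ∈ boundedIdeal E := by
  obtain ⟨ε, hε, hAε⟩ := hA
  obtain ⟨δ, hδ, hBδ⟩ := hB
  exact ⟨ε ∪ δ, hE.union_mem hε hδ, Set.union_subset_union hAε hBδ⟩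

lemma isGroupIdeal_boundedIdeal (hE : IsCoarseStructure E) (hc : IsConnectedCoarse E)
    (hgr : IsCoarseGroup E) : IsGroupIdeal (boundedIdeal E) := by
  refine ⟨fun A ⟨ε, hε, hAε⟩ B hBA => ⟨ε, hε, hBA.trans hAε⟩,
    fun A hA B hB => union_mem_boundedIdeal hE hA hB, fun A hA => ?_, ?_⟩
  · induction A, hA using Set.Finite.induction_on with
    | empty =>
      obtain ⟨ε, hε, -⟩ := hc 1 1
      exact ⟨ε, hε, Set.empty_subset _⟩
    | @insert a S _ _ hS =>
      obtain ⟨ε, hε, h1a⟩ := hc 1 a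
      exact union_mem_boundedIdeal hE ⟨ε, hε, Set.singleton_subset_iff.2 h1a⟩ hS
  · rintro A ⟨ε, hε, hAε⟩ B ⟨δ, hδ, hBδ⟩
    obtain ⟨δ', hδ', hinv⟩ := hgr.2 δ hδ
    obtain ⟨γ, hγ, hmul⟩ := hgr.exists_mul_mem hE hε hδ'
    refine ⟨γ, hγ, ?_⟩
    rintro x ⟨a, ha, b, hb, rfl⟩
    simpa [ball] using hmul 1 a 1 b⁻¹ (hAε ha) (by simpa using hinv (1, b) (hBδ hb))

lemma idealCoarse_boundedIdeal (hE : IsCoarseStructure E) (hgr : IsCoarseGroup E) :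
    idealCoarse (boundedIdeal E) = E := by
  ext ε
  constructor
  · rintro ⟨hdiag, A, ⟨δ, hδ, hAδ⟩, -, hεA⟩
    obtain ⟨γ, hγ, hmul⟩ := hgr.exists_mul_mem hE hδ hδ
    refine hE.2.2.2 γ hγ ε (fun ⟨x, y⟩ hxy => ?_) hdiag
    have hyx := hAδ (mem_entourageOf_iff_div_mem.1 (hεA hxy))
    simpa using hmul 1 (y / x) x x hyx (hE.1 δ hδ x)
  · intro hε
    obtain ⟨γ, hγ, hmul⟩ := hgr.exists_mul_mem hE hε hε
    refine ⟨hE.1 ε hε, ball γ 1, ⟨γ, hγ, subset_rfl⟩, hE.1 γ hγ 1, fun ⟨x, y⟩ hxy => ?_⟩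
    rw [mem_entourageOf_iff_div_mem]
    simpa [ball, div_eq_mul_inv] using hmul x y x⁻¹ x⁻¹ hxy (hE.1 ε hε x⁻¹)

end boundedIdeal

section restrict

variable {G : Type*} [Group G] {H : Subgroup G}

variable (H) in
def restrictIdeal (I : Set (Set G)) : Set (Set H) :=
  {B | H.subtype '' B ∈ I}

lemma restrictCoarse_idealCoarse {I : Set (Set G)} (hI : IsGroupIdeal I) :
    restrictCoarse (idealCoarse I) (H : Set G) = idealCoarse (restrictIdeal H I) := by
  ext s
  constructor
  · rintro ⟨ε, ⟨hdiag, A, hA, hA1, hεA⟩, rfl⟩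
    refine ⟨fun x => hdiag x, H.subtype ⁻¹' A, hI.1 A hA _ (Set.image_preimage_subset _ _), hA1,
      fun p hp => ?_⟩
    rw [mem_entourageOf_iff_div_mem, Set.mem_preimage, map_div]
    exact mem_entourageOf_iff_div_mem.1 (hεA hp)
  · rintro ⟨hdiag, B, hB, hB1, hsB⟩
    let coe₂ : H × H → G × G := Prod.map Subtype.val Subtype.val
    refine ⟨{p | p.1 = p.2} ∪ coe₂ '' s,
      ⟨fun x => Or.inl rfl, H.subtype '' B, hB, ⟨1, hB1, rfl⟩, ?_⟩, ?_⟩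
    · rintro p (hp | ⟨q, hq, rfl⟩)
      · exact mem_entourageOf_iff_div_mem.2 ⟨1, hB1, by simp [show p.1 = p.2 from hp]⟩
      · exact mem_entourageOf_iff_div_mem.2
          ⟨q.2 / q.1, mem_entourageOf_iff_div_mem.1 (hsB hq), map_div _ _ _⟩
    · change s = coe₂ ⁻¹' _
      rw [Set.preimage_union, Set.preimage_image_eq _
        (Subtype.val_injective.prodMap Subtype.val_injective), eq_comm, Set.union_eq_right]
      rintro ⟨x, y⟩ (hxy : (x : G) = y)
      obtain rfl := Subtype.ext hxy
      exact hdiag x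

end restrict

section extend

variable {G : Type*} [CommGroup G] {H : Subgroup G}

variable (H) in
def extendIdeal (I : Set (Set H)) : Set (Set G) :=
  {A | ∃ F : Set G, F.Finite ∧ ∃ B ∈ I, A ⊆ F * H.subtype '' B}

lemma isGroupIdeal_extendIdeal {I : Set (Set H)} (hI : IsGroupIdeal I) :
    IsGroupIdeal (extendIdeal H I) := by
  refine ⟨fun A ⟨F, hF, B, hB, hA⟩ A' hA' => ⟨F, hF, B, hB, hA'.trans hA⟩, ?_,
    fun A hA => ⟨A, hA, 1, hI.one_mem, by simp⟩, ?_⟩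
  · rintro A₁ ⟨F₁, hF₁, B₁, hB₁, hA₁⟩ A₂ ⟨F₂, hF₂, B₂, hB₂, hA₂⟩
    refine ⟨F₁ ∪ F₂, hF₁.union hF₂, B₁ ∪ B₂, hI.2.1 B₁ hB₁ B₂ hB₂, Set.union_subset ?_ ?_⟩
    · exact hA₁.trans (Set.mul_subset_mul Set.subset_union_left
        (Set.image_mono Set.subset_union_left))
    · exact hA₂.trans (Set.mul_subset_mul Set.subset_union_right
        (Set.image_mono Set.subset_union_right))
  · rintro A₁ ⟨F₁, hF₁, B₁, hB₁, hA₁⟩ A₂ ⟨F₂, hF₂, B₂, hB₂, hA₂⟩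
    refine ⟨F₁ / F₂, hF₁.div hF₂, B₁ / B₂, hI.div_mem hB₁ hB₂, ?_⟩
    rw [setOf_exists_mul_inv_eq_div, Set.image_div, ← mul_div_mul_comm]
    exact Set.div_subset_div hA₁ hA₂

lemma restrictIdeal_extendIdeal {I : Set (Set H)} (hI : IsGroupIdeal I) :
    restrictIdeal H (extendIdeal H I) = I := by
  ext B
  constructor
  · rintro ⟨F, hF, C, hC, hBC⟩
    have hF' : (H.subtype ⁻¹' F).Finite := hF.preimage H.subtype_injective.injOn
    refine hI.1 _ (hI.mul_mem (hI.2.2.1 _ hF') hC) B fun b hb => ?_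
    obtain ⟨f, hf, _, ⟨c, hc, rfl⟩, hfc : f * c = b⟩ := hBC ⟨b, hb, rfl⟩
    have hbc : H.subtype (b * c⁻¹) = f := by
      simpa using (eq_mul_inv_of_mul_eq hfc).symm
    exact ⟨b * c⁻¹, by rwa [Set.mem_preimage, hbc], c, hc, inv_mul_cancel_right b c⟩
  · exact fun hB => ⟨1, Set.finite_one, B, hB, by simp⟩

end extend

/-- Every group coarse structure `E` on a subgroup `H` of an abelian group `G` extends
to a group coarse structure `E'` on `G` whose restriction to `H` is `E`. -/
theorem extend_group_coarse_structure_abelian {G : Type*} [CommGroup G]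
    (H : Subgroup G) (E : Set (Set (H × H)))
    (hE : IsCoarseStructure E) (hc : IsConnectedCoarse E) (hgr : IsCoarseGroup E) :
    ∃ E' : Set (Set (G × G)), IsCoarseStructure E' ∧ IsCoarseGroup E' ∧
      restrictCoarse E' (H : Set G) = E := by
  have hI := isGroupIdeal_boundedIdeal hE hc hgr
  have hI' := isGroupIdeal_extendIdeal hI
  refine ⟨idealCoarse (extendIdeal H (boundedIdeal E)), isCoarseStructure_idealCoarse hI',
    isCoarseGroup_idealCoarse hI', ?_⟩
  rw [restrictCoarse_idealCoarse hI', restrictIdeal_extendIdeal hI,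
    idealCoarse_boundedIdeal hE hgr]
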